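/- For distinct indices i, j, k in {1,2,3} and natural numbers n, q, the identity E_{ji}⁻¹ · E_{ik}^q · E_{ki} = E_{ik}^q · E_{ki} · (E_{ji}⁻¹ · E_{jk}⁻¹)^q · E_{ji}⁻¹ holds in SL(3,ℤ). -/

import Mathlib

/-!
Move `E_{ji}⁻¹` to the right. Passing `E_{ik}^q`, the Steinberg relation `[E_{ji}, E_{ik}] = E_{jk}`
leaves a factor `E_{jk}^{-q}`; `E_{ji}` commutes with `E_{ki}`; and moving `E_{jk}^{-q}` past `E_{ki}`
leaves `E_{ji}^{-q}` by the same relation. Transvections supported in row `j` commute, so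
`E_{ji}^{-q} E_{jk}^{-q} = (E_{ji}⁻¹ E_{jk}⁻¹)^q`.
-/

/-- The elementary matrix `E i j` (identity plus a 1 in position `(i,j)`),
as an element of `SL(3, ℤ)`. -/
def Esl (i j : Fin 3) (h : i ≠ j) : Matrix.SpecialLinearGroup (Fin 3) ℤ :=
  ⟨Matrix.transvection i j 1, Matrix.det_transvection_of_ne i j h 1⟩

namespace Matrix.SpecialLinearGroup

variable {ι F : Type*} [DecidableEq ι] [Fintype ι] [CommRing F]

lemma transvection_pow {i j : ι} (hij : i ≠ j) (b : F) (q : ℕ) :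
    transvection hij b ^ q = transvection hij (q * b) := by
  induction q with
  | zero => simp
  | succ q ih => rw [pow_succ, ih, ← transvection_add]; push_cast; ring_nf

lemma commute_transvection {i j k l : ι} (hij : i ≠ j) (hkl : k ≠ l) (hjk : j ≠ k)
    (hli : l ≠ i) (a b : F) :
    Commute (transvection hij a) (transvection hkl b) := Subtype.ext <| by
  simp [transvection_coe, mul_add, add_mul, single_mul_single_of_ne _ _ _ _ hjk,
    single_mul_single_of_ne _ _ _ _ hli, add_comm, add_left_comm]

-- The Steinberg relation `[E_{ji}(a), E_{ik}(b)] = E_{jk}(ab)`.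
lemma transvection_mul_transvection_of_ne {i j k : ι} (hji : j ≠ i) (hik : i ≠ k)
    (hjk : j ≠ k) (a b : F) :
    transvection hji a * transvection hik b =
      transvection hik b * transvection hjk (a * b) * transvection hji a := Subtype.ext <| by
  simp only [coe_mul, transvection_coe, mul_add, mul_one, add_mul, one_mul,
    single_mul_single_same, single_mul_single_of_ne _ _ _ _ hjk.symm, add_zero]
  abel

lemma transvection_mul_transvection_mul_transvection {i j k : ι} (hji : j ≠ i) (hik : i ≠ k)
    (hki : k ≠ i) (hjk : j ≠ k) (a b c : F) :
    transvection hji a * transvection hik b * transvection hki c =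
      transvection hik b * transvection hki c *
        (transvection hji (a * b * c) * transvection hjk (a * b)) * transvection hji a := by
  rw [transvection_mul_transvection_of_ne hji hik hjk, mul_assoc _ (transvection hji a),
    (commute_transvection hji hki hik hji.symm a c).eq, ← mul_assoc,
    mul_assoc _ (transvection hjk _), transvection_mul_transvection_of_ne hjk hki hji]
  simp only [mul_assoc]

lemma transvection_mul_transvection_pow {i j k : ι} (hji : j ≠ i) (hjk : j ≠ k) (a b : F)
    (q : ℕ) :
    (transvection hji a * transvection hjk b) ^ q =
      transvection hji (q * a) * transvection hjk (q * b) := by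
  rw [(commute_transvection hji hjk hji.symm hjk.symm a b).mul_pow, transvection_pow,
    transvection_pow]

end Matrix.SpecialLinearGroup

lemma Esl_eq_transvection (i j : Fin 3) (h : i ≠ j) :
    Esl i j h = Matrix.SpecialLinearGroup.transvection h 1 :=
  rfl

theorem global_first_stage_general (i j k : Fin 3)
    (hji : j ≠ i) (hik : i ≠ k) (hki : k ≠ i) (hjk : j ≠ k) (q : ℕ) :
    (Esl j i hji)⁻¹ * (Esl i k hik) ^ q * Esl k i hki =
      (Esl i k hik) ^ q * Esl k i hki *
        ((Esl j i hji)⁻¹ * (Esl j k hjk)⁻¹) ^ q * (Esl j i hji)⁻¹ := by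
  simp only [Esl_eq_transvection, Matrix.SpecialLinearGroup.transvection_inv,
    Matrix.SpecialLinearGroup.transvection_pow,
    Matrix.SpecialLinearGroup.transvection_mul_transvection_pow,
    Matrix.SpecialLinearGroup.transvection_mul_transvection_mul_transvection hji hik hki hjk]
  ring_nf

theorem global_first_stage (i j k : Fin 3)
    (hji : j ≠ i) (hik : i ≠ k) (hki : k ≠ i) (hjk : j ≠ k) (n q : ℕ) :
    (Esl j i hji)⁻¹ * (Esl i k hik) ^ q * Esl k i hki =
      (Esl i k hik) ^ q * Esl k i hki *
        ((Esl j i hji)⁻¹ * (Esl j k hjk)⁻¹) ^ q * (Esl j i hji)⁻¹ :=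
  global_first_stage_general i j k hji hik hki hjk q
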